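/- Under the action on (ℤ/18ℤ)² generated by ρ(a,b) = (b+9, a+9) and τ(a,b) = (18-a, b-a), the point (0,9) is a fixed point, the pair {(6,3), (12,15)} forms an orbit of size 2, and for each a ≠ 9 in ℤ/18ℤ the points (0,a), (a+9, 9), (9-a, -a) form an orbit of size 3. -/
import Mathlib

/-- `ρ(a,b) = (b+9, a+9)` on `(ℤ/18ℤ)²`. -/
def rhoPerm : Equiv.Perm (ZMod 18 × ZMod 18) :=
  Function.Involutive.toPerm (fun x => (x.2 + 9, x.1 + 9)) (fun x => by
    obtain ⟨a, b⟩ := x; simp [add_assoc]; decide)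

/-- `τ(a,b) = (18-a, b-a)` on `(ℤ/18ℤ)²`. -/
def tauPerm : Equiv.Perm (ZMod 18 × ZMod 18) :=
  Function.Involutive.toPerm (fun x => (-x.1, x.2 - x.1)) (fun x => by simp)

/-- The group generated by `ρ` and `τ`. -/
def Grt : Subgroup (Equiv.Perm (ZMod 18 × ZMod 18)) :=
  Subgroup.closure {rhoPerm, tauPerm}

lemma rho_apply (x : ZMod 18 × ZMod 18) : rhoPerm x = (x.2 + 9, x.1 + 9) := rfl
lemma tau_apply (x : ZMod 18 × ZMod 18) : tauPerm x = (-x.1, x.2 - x.1) := rfl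
lemma rho_inv : rhoPerm⁻¹ = rhoPerm := Equiv.Perm.inv_def rhoPerm ▸ Function.Involutive.toPerm_symm _
lemma tau_inv : tauPerm⁻¹ = tauPerm := Equiv.Perm.inv_def tauPerm ▸ Function.Involutive.toPerm_symm _
lemma rho_mem : rhoPerm ∈ Grt := Subgroup.subset_closure (Set.mem_insert _ _)
lemma tau_mem : tauPerm ∈ Grt := Subgroup.subset_closure (Set.mem_insert_of_mem _ rfl)

lemma orbit_eq (T : Set (ZMod 18 × ZMod 18)) (x : ZMod 18 × ZMod 18) (hx : x ∈ T)
    (hT : T ⊆ MulAction.orbit Grt x)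
    (hρ : ∀ y ∈ T, rhoPerm y ∈ T) (hτ : ∀ y ∈ T, tauPerm y ∈ T) :
    MulAction.orbit Grt x = T := by
  refine le_antisymm ?_ hT
  rintro y ⟨⟨g, hg⟩, rfl⟩
  have key : ∀ g ∈ Grt, (∀ y ∈ T, g y ∈ T) ∧ (∀ y ∈ T, g⁻¹ y ∈ T) := by
    intro g hg
    induction hg using Subgroup.closure_induction with
    | mem g hgm =>
      rcases hgm with h | h
      · subst h; exact ⟨hρ, by rw [rho_inv]; exact hρ⟩
      · rw [Set.mem_singleton_iff] at h; subst h
        exact ⟨hτ, by rw [tau_inv]; exact hτ⟩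
    | one => simp
    | mul g h _ _ ihg ihh =>
      refine ⟨fun y hy => ?_, fun y hy => ?_⟩
      · simpa using ihg.1 _ (ihh.1 y hy)
      · simpa using ihh.2 _ (ihg.2 y hy)
    | inv g _ ihg => rw [inv_inv]; exact ⟨ihg.2, ihg.1⟩
  exact (key g hg).1 x hx

lemma mem_orbit' (x y : ZMod 18 × ZMod 18) (g : Equiv.Perm (ZMod 18 × ZMod 18))
    (hg : g ∈ Grt) (h : g x = y) : y ∈ MulAction.orbit Grt x :=
  ⟨⟨g, hg⟩, h⟩

/-- Under `⟨ρ,τ⟩`: `(0,9)` is a fixed point, `{(6,3),(12,15)}` is an orbit of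
size 2, and for `a ≠ 9` the points `(0,a)`, `(a+9,9)`, `(9-a,-a)` form an orbit
of size 3. -/
theorem orbit_structure_eighteen :
    MulAction.orbit Grt ((0, 9) : ZMod 18 × ZMod 18) = {(0, 9)} ∧
    MulAction.orbit Grt ((6, 3) : ZMod 18 × ZMod 18) = {(6, 3), (12, 15)} ∧
    Nat.card (MulAction.orbit Grt ((6, 3) : ZMod 18 × ZMod 18)) = 2 ∧
    ∀ a : ZMod 18, a ≠ 9 →
      MulAction.orbit Grt ((0, a) : ZMod 18 × ZMod 18) = {(0, a), (a + 9, 9), (9 - a, -a)} ∧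
      Nat.card (MulAction.orbit Grt ((0, a) : ZMod 18 × ZMod 18)) = 3 := by
  have h18 : (18 : ZMod 18) = 0 := by decide
  have horb2 : MulAction.orbit Grt ((6, 3) : ZMod 18 × ZMod 18) = {(6, 3), (12, 15)} := by
    apply orbit_eq
    · exact Set.mem_insert _ _
    · rintro y (rfl | rfl)
      · exact MulAction.mem_orbit_self _
      · exact mem_orbit' _ _ rhoPerm rho_mem (by rw [rho_apply]; decide)
    · rintro y (rfl | rfl) <;> rw [rho_apply] <;> [right; left] <;> decide
    · rintro y (rfl | rfl) <;> rw [tau_apply] <;> [right; left] <;> decide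
  refine ⟨?_, horb2, ?_, ?_⟩
  · apply orbit_eq
    · rfl
    · rintro y rfl; exact MulAction.mem_orbit_self _
    · rintro y rfl; rw [rho_apply]; decide
    · rintro y rfl; rw [tau_apply]; decide
  · rw [horb2, Nat.card_coe_set_eq, Set.ncard_pair (by decide)]
  · intro a ha
    have horb : MulAction.orbit Grt ((0, a) : ZMod 18 × ZMod 18)
        = {(0, a), (a + 9, 9), (9 - a, -a)} := by
      apply orbit_eq
      · exact Set.mem_insert _ _
      · rintro y (rfl | rfl | rfl)
        · exact MulAction.mem_orbit_self _
        · exact mem_orbit' _ _ rhoPerm rho_mem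
            (by rw [rho_apply]; exact Prod.ext rfl (by ring))
        · refine mem_orbit' _ _ (tauPerm * rhoPerm) (mul_mem tau_mem rho_mem) ?_
          rw [Equiv.Perm.mul_apply, rho_apply, tau_apply]
          exact Prod.ext (by dsimp; linear_combination -h18) (by dsimp; ring)
      · rintro y (rfl | rfl | rfl) <;> rw [rho_apply]
        · right; left; exact Prod.ext rfl (by ring)
        · left; exact Prod.ext (by dsimp; linear_combination h18) (by dsimp; linear_combination h18)
        · right; right; exact Prod.ext (by dsimp; ring) (by dsimp; linear_combination h18)
      · rintro y (rfl | rfl | rfl) <;> rw [tau_apply]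
        · left; exact Prod.ext (by simp) (by dsimp; ring)
        · right; right
          exact Prod.ext (by dsimp; linear_combination -h18) (by dsimp; ring)
        · right; left
          exact Prod.ext (by dsimp; linear_combination -h18) (by dsimp; linear_combination -h18)
    refine ⟨horb, ?_⟩
    have hne9 : (-9 : ZMod 18) = 9 := by decide
    rw [horb, Nat.card_coe_set_eq]
    rw [Set.ncard_insert_of_notMem, Set.ncard_insert_of_notMem, Set.ncard_singleton]
    · intro h
      apply ha
      have h2 := congrArg Prod.snd h
      dsimp at h2
      rw [← hne9]; linear_combination h2
    · rintro (h | h) <;> {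
        apply ha
        have h2 := congrArg Prod.snd h
        have h1 := congrArg Prod.fst h
        dsimp at h1 h2
        first
          | linear_combination h1 | linear_combination -h1
          | linear_combination h2 | linear_combination -h2
          | (rw [← hne9]; first
              | linear_combination h1 | linear_combination -h1
              | linear_combination h2 | linear_combination -h2) }
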